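/- arXiv:0807.4138 — 5 statements merged into one kernel-verified Lean document; each statement's English description precedes it below -/
import Mathlib

section
/- Every element of H_n (the image of the pure braid group P_n under π_n) is a diagonal 2ⁿ × 2ⁿ matrix; in particular, the group H_n is commutative. -/
open Matrix

noncomputable section

/-- Kronecker product of square matrices, reindexed to `Fin (a * b)`
(lexicographically: the first factor is the most significant). -/
def kron {a b : ℕ} (A : Matrix (Fin a) (Fin a) ℂ) (B : Matrix (Fin b) (Fin b) ℂ) :
    Matrix (Fin (a * b)) (Fin (a * b)) ℂ :=
  Matrix.reindex finProdFinEquiv finProdFinEquiv (Matrix.kroneckerMap (· * ·) A B)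

/-- The Yang–Baxter solution `R` with rows `(1,0,0,0), (0,0,α,0), (0,β,0,0), (0,0,0,γ)`. -/
def Rmat (α β γ : ℂ) : Matrix (Fin 4) (Fin 4) ℂ :=
  !![1, 0, 0, 0; 0, 0, α, 0; 0, β, 0, 0; 0, 0, 0, γ]

/-- `I₂^{⊗(i−1)} ⊗ M ⊗ I₂^{⊗(n−i−1)}` as a `2ⁿ × 2ⁿ` matrix.  The size condition in the
`dite` holds precisely when `1 ≤ i ≤ n − 1`. -/
def triKron (n i : ℕ) (M : Matrix (Fin 4) (Fin 4) ℂ) :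
    Matrix (Fin (2 ^ n)) (Fin (2 ^ n)) ℂ :=
  if h : 2 ^ (i - 1) * (4 * 2 ^ (n - i - 1)) = 2 ^ n then
    Matrix.reindex (finCongr h) (finCongr h)
      (kron (1 : Matrix (Fin (2 ^ (i - 1))) (Fin (2 ^ (i - 1))) ℂ)
        (kron M (1 : Matrix (Fin (2 ^ (n - i - 1))) (Fin (2 ^ (n - i - 1))) ℂ)))
  else 1

/-- `B_i = I₂^{⊗(i−1)} ⊗ R ⊗ I₂^{⊗(n−i−1)}`. -/
def Bmat (α β γ : ℂ) (n i : ℕ) : Matrix (Fin (2 ^ n)) (Fin (2 ^ n)) ℂ :=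
  triKron n i (Rmat α β γ)


/-- The set of elements of `GL(2ⁿ, ℂ)` whose underlying matrix is one of `B_1, …, B_{n−1}`. -/
def genSet (α β γ : ℂ) (n : ℕ) : Set (GL (Fin (2 ^ n)) ℂ) :=
  {g | ∃ i : ℕ, 1 ≤ i ∧ i ≤ n - 1 ∧
    (g : Matrix (Fin (2 ^ n)) (Fin (2 ^ n)) ℂ) = Bmat α β γ n i}

/-- `G_n`: the subgroup of `GL(2ⁿ, ℂ)` generated by `B_1, …, B_{n−1}`
(the image of the braid group `B_n` under `π_n`). -/
def Gsub (α β γ : ℂ) (n : ℕ) : Subgroup (GL (Fin (2 ^ n)) ℂ) :=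
  Subgroup.closure (genSet α β γ n)

/-- `H_n`: the subgroup generated by all conjugates `g B_i² g⁻¹` with `g ∈ G_n`
(the image of the pure braid group `P_n` under `π_n`). -/
def Hsub (α β γ : ℂ) (n : ℕ) : Subgroup (GL (Fin (2 ^ n)) ℂ) :=
  Subgroup.closure
    {h | ∃ g ∈ Gsub α β γ n, ∃ b ∈ genSet α β γ n, h = g * b ^ 2 * g⁻¹}

/-! Each `B_i` is a monomial matrix whose permutation is an involution (it swaps the basis
vectors `e₀ ⊗ e₁` and `e₁ ⊗ e₀` of two adjacent tensor factors), so `G_n` consists of monomial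
matrices and every `B_i²` is diagonal. Conjugating a diagonal matrix by a monomial one only
permutes its diagonal, so the generators `g B_i² g⁻¹` of `H_n` are diagonal, and invertible
diagonal matrices commute. -/

namespace Matrix

variable {N M : Type*} {R : Type*}

def IsMonomialWith [Zero R] (A : Matrix N N R) (σ : Equiv.Perm N) : Prop :=
  ∀ i j, j ≠ σ i → A i j = 0

theorem isMonomialWith_one_iff_isDiag [Zero R] {A : Matrix N N R} :
    IsMonomialWith A 1 ↔ A.IsDiag :=
  forall₂_congr fun _ _ => by rw [Equiv.Perm.one_apply, ne_comm]

theorem isMonomialWith_one [DecidableEq N] [Zero R] [One R] :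
    IsMonomialWith (1 : Matrix N N R) 1 :=
  isMonomialWith_one_iff_isDiag.2 isDiag_one

theorem IsMonomialWith.reindex [Zero R] {A : Matrix N N R} {σ : Equiv.Perm N} (e : N ≃ M)
    (hA : IsMonomialWith A σ) : IsMonomialWith (reindex e e A) (e.permCongr σ) :=
  fun i j hij => hA _ _ fun h => hij (by simp [← h])

theorem IsMonomialWith.kroneckerMap [MulZeroClass R] {A : Matrix N N R} {B : Matrix M M R}
    {σ : Equiv.Perm N} {τ : Equiv.Perm M} (hA : IsMonomialWith A σ) (hB : IsMonomialWith B τ) :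
    IsMonomialWith (kroneckerMap (· * ·) A B) (σ.prodCongr τ) := by
  rintro ⟨i₁, i₂⟩ ⟨j₁, j₂⟩ hij
  by_cases h₁ : j₁ = σ i₁
  · have h₂ : j₂ ≠ τ i₂ := fun h₂ => hij (by simp [h₁, h₂])
    simp [hB _ _ h₂]
  · simp [hA _ _ h₁]

section Semiring

variable [Fintype N] [Semiring R] {A B : Matrix N N R} {σ τ : Equiv.Perm N}

theorem IsMonomialWith.mul_apply_left (hA : IsMonomialWith A σ) (i j : N) :
    (A * B) i j = A i (σ i) * B (σ i) j :=
  Fintype.sum_eq_single _ fun k hk => by simp [hA i k hk]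

theorem IsMonomialWith.mul_apply_right (hB : IsMonomialWith B σ) (i j : N) :
    (A * B) i (σ j) = A i j * B j (σ j) :=
  Fintype.sum_eq_single _ fun k hk => by simp [hB k (σ j) fun h => hk (σ.injective h).symm]

theorem IsMonomialWith.mul (hA : IsMonomialWith A σ) (hB : IsMonomialWith B τ) :
    IsMonomialWith (A * B) (τ * σ) :=
  fun i j hij => by rw [hA.mul_apply_left, hB _ _ hij, mul_zero]

variable [DecidableEq N]

/-- The entries `g i (σ i)` of an invertible monomial matrix have left inverses
`g⁻¹ (σ i) i`, which cancel them in the rows of `g * g⁻¹ = 1`. -/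
theorem IsMonomialWith.inv {g : GL N R} (hg : IsMonomialWith (g : Matrix N N R) σ) :
    IsMonomialWith (↑g⁻¹ : Matrix N N R) σ⁻¹ := by
  intro i k hk
  obtain ⟨j, rfl⟩ := σ.surjective i
  have hleft : (↑g⁻¹ : Matrix N N R) (σ j) j * (g : Matrix N N R) j (σ j) = 1 := by
    rw [← hg.mul_apply_right, ← Units.val_mul, inv_mul_cancel, Units.val_one, one_apply_eq]
  have hrow : (g : Matrix N N R) j (σ j) * (↑g⁻¹ : Matrix N N R) (σ j) k = 0 := by
    rw [← hg.mul_apply_left, ← Units.val_mul, mul_inv_cancel, Units.val_one,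
      one_apply_ne fun h => hk (by simp [h])]
  rw [← one_mul ((↑g⁻¹ : Matrix N N R) (σ j) k), ← hleft, mul_assoc, hrow, mul_zero]

variable (N R)

def monomialSubgroup : Subgroup (GL N R) where
  carrier := {g | ∃ σ, IsMonomialWith (g : Matrix N N R) σ}
  mul_mem' := by
    rintro a b ⟨σ, ha⟩ ⟨τ, hb⟩
    exact ⟨τ * σ, ha.mul hb⟩
  one_mem' := ⟨1, isMonomialWith_one⟩
  inv_mem' := by
    rintro g ⟨σ, hg⟩
    exact ⟨σ⁻¹, hg.inv⟩

def diagonalSubgroup : Subgroup (GL N R) where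
  carrier := {g | (g : Matrix N N R).IsDiag}
  mul_mem' := by
    intro a b ha hb
    rw [Set.mem_ofPred_eq, ← isMonomialWith_one_iff_isDiag] at *
    exact ha.mul hb
  one_mem' := isDiag_one
  inv_mem' := by
    intro g hg
    rw [Set.mem_ofPred_eq, ← isMonomialWith_one_iff_isDiag] at *
    exact hg.inv

variable {N R}

theorem sq_mem_diagonalSubgroup {g : GL N R} (hσ : Function.Involutive σ)
    (hg : IsMonomialWith (g : Matrix N N R) σ) : g ^ 2 ∈ diagonalSubgroup N R := by
  have hσσ : σ * σ = 1 := Equiv.ext hσ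
  show IsDiag _
  rw [← isMonomialWith_one_iff_isDiag, ← hσσ, sq, Units.val_mul]
  exact hg.mul hg

theorem conj_mem_diagonalSubgroup {g d : GL N R} (hg : g ∈ monomialSubgroup N R)
    (hd : d ∈ diagonalSubgroup N R) : g * d * g⁻¹ ∈ diagonalSubgroup N R := by
  obtain ⟨σ, hσ⟩ := hg
  have hd : IsMonomialWith (d : Matrix N N R) 1 := isMonomialWith_one_iff_isDiag.2 hd
  show IsDiag _
  rw [← isMonomialWith_one_iff_isDiag, Units.val_mul, Units.val_mul]
  simpa using (hσ.mul hd).mul hσ.inv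

end Semiring

theorem commute_of_mem_diagonalSubgroup [Fintype N] [DecidableEq N] [CommSemiring R]
    {a b : GL N R} (ha : a ∈ diagonalSubgroup N R) (hb : b ∈ diagonalSubgroup N R) :
    Commute a b := by
  ext1
  rw [Units.val_mul, Units.val_mul, ← IsDiag.diagonal_diag ha, ← IsDiag.diagonal_diag hb,
    diagonal_mul_diagonal, diagonal_mul_diagonal]
  simp_rw [mul_comm]

end Matrix

open Matrix

theorem isMonomialWith_Rmat (α β γ : ℂ) : IsMonomialWith (Rmat α β γ) (Equiv.swap 1 2) := by
  intro i j hij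
  fin_cases i <;> fin_cases j <;> first
    | exact absurd (by decide) hij
    | simp [Rmat]

theorem exists_involutive_isMonomialWith_triKron {n i : ℕ} {A : Matrix (Fin 4) (Fin 4) ℂ}
    {σ : Equiv.Perm (Fin 4)} (hσ : Function.Involutive σ) (hA : IsMonomialWith A σ) :
    ∃ τ : Equiv.Perm _, Function.Involutive τ ∧ IsMonomialWith (triKron n i A) τ := by
  unfold triKron kron
  split
  · refine ⟨_, fun x => ?_, ((isMonomialWith_one.kroneckerMap
      ((hA.kroneckerMap isMonomialWith_one).reindex _)).reindex _).reindex _⟩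
    simp only [Equiv.permCongr_apply, Equiv.symm_apply_apply, Equiv.prodCongr_apply, Prod.map,
      Equiv.Perm.coe_one, id, hσ _, Prod.mk.eta, Equiv.apply_symm_apply]
  · exact ⟨1, fun _ => rfl, isMonomialWith_one⟩

theorem exists_involutive_isMonomialWith_of_mem_genSet {α β γ : ℂ} {n : ℕ} {b}
    (hb : b ∈ genSet α β γ n) :
    ∃ τ : Equiv.Perm _, Function.Involutive τ ∧
      IsMonomialWith (b : Matrix (Fin (2 ^ n)) (Fin (2 ^ n)) ℂ) τ := by
  obtain ⟨i, -, -, hb⟩ := hb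
  rw [hb]
  exact exists_involutive_isMonomialWith_triKron (Equiv.swap_apply_self 1 2)
    (isMonomialWith_Rmat α β γ)

theorem Gsub_le_monomialSubgroup (α β γ : ℂ) (n : ℕ) :
    Gsub α β γ n ≤ monomialSubgroup (Fin (2 ^ n)) ℂ := by
  refine Subgroup.closure_le _ |>.2 fun b hb => ?_
  obtain ⟨τ, -, hτ⟩ := exists_involutive_isMonomialWith_of_mem_genSet hb
  exact ⟨τ, hτ⟩

theorem Hsub_le_diagonalSubgroup (α β γ : ℂ) (n : ℕ) :
    Hsub α β γ n ≤ diagonalSubgroup (Fin (2 ^ n)) ℂ := by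
  refine Subgroup.closure_le _ |>.2 ?_
  rintro _ ⟨g, hg, b, hb, rfl⟩
  obtain ⟨τ, hτ, hbτ⟩ := exists_involutive_isMonomialWith_of_mem_genSet hb
  exact conj_mem_diagonalSubgroup (Gsub_le_monomialSubgroup α β γ n hg)
    (sq_mem_diagonalSubgroup hτ hbτ)

theorem stmt_5_general (n : ℕ) (α β γ : ℂ) :
    (∀ x ∈ Hsub α β γ n, ((x : GL (Fin (2 ^ n)) ℂ) :
        Matrix (Fin (2 ^ n)) (Fin (2 ^ n)) ℂ).IsDiag) ∧
    (∀ x ∈ Hsub α β γ n, ∀ y ∈ Hsub α β γ n, x * y = y * x) :=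
  have hH := Hsub_le_diagonalSubgroup α β γ n
  ⟨fun _ hx => hH hx, fun _ hx _ hy => commute_of_mem_diagonalSubgroup (hH hx) (hH hy)⟩

/-- Every element of `H_n = π_n(P_n)` is a diagonal matrix; in particular `H_n` is commutative. -/
theorem stmt_5 (n : ℕ) (hn : 2 ≤ n) (α β γ : ℂ) (hα : α ≠ 0) (hβ : β ≠ 0) (hγ : γ ≠ 0) :
    (∀ x ∈ Hsub α β γ n, ((x : GL (Fin (2 ^ n)) ℂ) :
        Matrix (Fin (2 ^ n)) (Fin (2 ^ n)) ℂ).IsDiag) ∧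
    (∀ x ∈ Hsub α β γ n, ∀ y ∈ Hsub α β γ n, x * y = y * x) :=
  stmt_5_general n α β γ
end
end

section
/- Suppose there exists an integer k ≥ 1 with (αβ)^k = 1 and γ^{2k} = 1 (equivalently, R^{2k} is the identity, i.e. all eigenvalues of R are roots of unity). Then the group H_n (the image of the pure braid group P_n) is a finite abelian group. -/
open Matrix

noncomputable section

/-! Each `B_i` is a monomial matrix, so conjugation by an element of `G_n` permutes diagonal
entries and `G_n` normalizes the finite abelian group `D` of diagonal matrices whose entries are
`k`-th roots of unity. Since `R² = diag(1, αβ, αβ, γ²)`, every `B_i²` lies in `D`, hence so do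
all its `G_n`-conjugates, and `H_n ≤ D`. -/

open scoped Kronecker

namespace Matrix

variable {l m n R : Type*}

/-- `M` has all its nonzero entries on the graph of some permutation; together with
invertibility this says that `M` is a monomial matrix. -/
def IsMonomial [Zero R] (M : Matrix m m R) : Prop :=
  ∃ σ : Equiv.Perm m, ∀ i j, M i j ≠ 0 → i = σ j

theorem isMonomial_one [Zero R] [One R] [DecidableEq m] : (1 : Matrix m m R).IsMonomial :=
  ⟨1, fun _ _ h => by_contra fun hij => h (one_apply_ne hij)⟩

theorem IsMonomial.kronecker [MulZeroClass R] {A : Matrix m m R} {B : Matrix n n R}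
    (hA : A.IsMonomial) (hB : B.IsMonomial) : (A ⊗ₖ B).IsMonomial := by
  obtain ⟨σ, hσ⟩ := hA
  obtain ⟨τ, hτ⟩ := hB
  refine ⟨σ.prodCongr τ, fun i j h => ?_⟩
  rw [kronecker_apply] at h
  exact Prod.ext (hσ _ _ (left_ne_zero_of_mul h)) (hτ _ _ (right_ne_zero_of_mul h))

theorem IsMonomial.reindex [Zero R] {A : Matrix m m R} (hA : A.IsMonomial) (e : m ≃ l) :
    (reindex e e A).IsMonomial := by
  obtain ⟨σ, hσ⟩ := hA
  refine ⟨e.symm.trans (σ.trans e), fun i j h => ?_⟩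
  simpa using congrArg e (hσ _ _ h)

theorem IsMonomial.exists_perm_mul_diagonal [Fintype m] [DecidableEq m] [CommRing R]
    {M : Matrix m m R} (hM : M.IsMonomial) :
    ∃ σ : Equiv.Perm m, ∀ d : m → R, M * diagonal d = diagonal (d ∘ σ.symm) * M := by
  obtain ⟨σ, hσ⟩ := hM
  refine ⟨σ, fun d => ?_⟩
  ext i j
  rw [mul_diagonal, diagonal_mul]
  by_cases h : M i j = 0
  · simp [h]
  · rw [hσ i j h, Function.comp_apply, Equiv.symm_apply_apply, mul_comm]

def rootsOfUnityDiagonal (k : ℕ) (m R : Type*) [CommMonoidWithZero R] [DecidableEq m] :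
    Set (Matrix m m R) :=
  Set.range fun v : m → rootsOfUnity k R => diagonal fun i => ((v i : Rˣ) : R)

variable {k : ℕ}

theorem diagonal_mem_rootsOfUnityDiagonal [CommMonoidWithZero R] [DecidableEq m] [NeZero k]
    {v : m → R} (hv : ∀ i, v i ^ k = 1) : diagonal v ∈ rootsOfUnityDiagonal k m R :=
  ⟨fun i => rootsOfUnity.mkOfPowEq (v i) (hv i), rfl⟩

theorem one_mem_rootsOfUnityDiagonal [CommMonoidWithZero R] [DecidableEq m] :
    (1 : Matrix m m R) ∈ rootsOfUnityDiagonal k m R :=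
  ⟨1, diagonal_one⟩

theorem kronecker_mem_rootsOfUnityDiagonal [CommMonoidWithZero R] [DecidableEq m]
    [DecidableEq n] {A : Matrix m m R} {B : Matrix n n R}
    (hA : A ∈ rootsOfUnityDiagonal k m R) (hB : B ∈ rootsOfUnityDiagonal k n R) :
    A ⊗ₖ B ∈ rootsOfUnityDiagonal k (m × n) R := by
  obtain ⟨a, rfl⟩ := hA
  obtain ⟨b, rfl⟩ := hB
  exact ⟨fun p => a p.1 * b p.2, by rw [diagonal_kronecker_diagonal]; rfl⟩

theorem reindex_mem_rootsOfUnityDiagonal [CommMonoidWithZero R] [DecidableEq m] [DecidableEq l]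
    {A : Matrix m m R} (hA : A ∈ rootsOfUnityDiagonal k m R) (e : m ≃ l) :
    reindex e e A ∈ rootsOfUnityDiagonal k l R := by
  obtain ⟨a, rfl⟩ := hA
  exact ⟨a ∘ e.symm, by rw [reindex_apply, submatrix_diagonal_equiv]; rfl⟩

section GeneralLinearGroup

variable [Fintype m] [DecidableEq m] [CommRing R]

variable (m R) in
def diagonalUnitsHom : (m → Rˣ) →* GL m R :=
  (Units.map (diagonalRingHom m R).toMonoidHom).comp MulEquiv.piUnits.symm.toMonoidHom

variable (m R) in
def rootsOfUnityDiagonalSubgroup (k : ℕ) : Subgroup (GL m R) :=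
  ((diagonalUnitsHom m R).comp ((rootsOfUnity k R).subtype.compLeft m)).range

theorem mem_rootsOfUnityDiagonalSubgroup {g : GL m R} :
    g ∈ rootsOfUnityDiagonalSubgroup m R k ↔ (g : Matrix m m R) ∈ rootsOfUnityDiagonal k m R :=
  exists_congr fun _ => Units.ext_iff

instance [IsDomain R] [NeZero k] : Finite (rootsOfUnityDiagonalSubgroup m R k) := by
  unfold rootsOfUnityDiagonalSubgroup
  exact Finite.of_surjective _ (MonoidHom.rangeRestrict_surjective _)

theorem rootsOfUnityDiagonalSubgroup_mul_comm {g h : GL m R}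
    (hg : g ∈ rootsOfUnityDiagonalSubgroup m R k) (hh : h ∈ rootsOfUnityDiagonalSubgroup m R k) :
    g * h = h * g := by
  obtain ⟨a, rfl⟩ := hg
  obtain ⟨b, rfl⟩ := hh
  rw [← map_mul, mul_comm, map_mul]

theorem mem_normalizer_rootsOfUnityDiagonalSubgroup {u : GL m R}
    (hu : (u : Matrix m m R).IsMonomial) :
    u ∈ Subgroup.normalizer (rootsOfUnityDiagonalSubgroup m R k : Set (GL m R)) := by
  obtain ⟨σ, hσ⟩ := hu.exists_perm_mul_diagonal
  set f := (diagonalUnitsHom m R).comp ((rootsOfUnity k R).subtype.compLeft m)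
  have conj_eq : ∀ v, u * f v * u⁻¹ = f (v ∘ σ.symm) := fun v => by
    rw [mul_inv_eq_iff_eq_mul]
    ext : 1
    exact hσ _
  refine Subgroup.mem_normalizer_iff.mpr fun h => ⟨?_, ?_⟩
  · rintro ⟨v, rfl⟩
    exact ⟨v ∘ σ.symm, (conj_eq v).symm⟩
  · rintro ⟨w, hw⟩
    refine ⟨w ∘ σ, ?_⟩
    have := conj_eq (w ∘ σ)
    rw [Function.comp_assoc, Equiv.self_comp_symm, Function.comp_id, hw] at this
    exact mul_left_cancel (mul_right_cancel this)

end GeneralLinearGroup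

theorem IsMonomial.kron {a b : ℕ} {A : Matrix (Fin a) (Fin a) ℂ} {B : Matrix (Fin b) (Fin b) ℂ}
    (hA : A.IsMonomial) (hB : B.IsMonomial) : (_root_.kron A B).IsMonomial :=
  (hA.kronecker hB).reindex _

theorem IsMonomial.triKron {n i : ℕ} {M : Matrix (Fin 4) (Fin 4) ℂ} (hM : M.IsMonomial) :
    (_root_.triKron n i M).IsMonomial := by
  unfold _root_.triKron
  split
  · exact (isMonomial_one.kron (hM.kron isMonomial_one)).reindex _
  · exact isMonomial_one

theorem kron_mem_rootsOfUnityDiagonal {a b : ℕ} {A : Matrix (Fin a) (Fin a) ℂ}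
    {B : Matrix (Fin b) (Fin b) ℂ} (hA : A ∈ rootsOfUnityDiagonal k (Fin a) ℂ)
    (hB : B ∈ rootsOfUnityDiagonal k (Fin b) ℂ) :
    kron A B ∈ rootsOfUnityDiagonal k (Fin (a * b)) ℂ :=
  reindex_mem_rootsOfUnityDiagonal (kronecker_mem_rootsOfUnityDiagonal hA hB) _

theorem triKron_mem_rootsOfUnityDiagonal {n i : ℕ} {M : Matrix (Fin 4) (Fin 4) ℂ}
    (hM : M ∈ rootsOfUnityDiagonal k (Fin 4) ℂ) :
    triKron n i M ∈ rootsOfUnityDiagonal k (Fin (2 ^ n)) ℂ := by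
  unfold triKron
  split
  · exact reindex_mem_rootsOfUnityDiagonal (kron_mem_rootsOfUnityDiagonal
      one_mem_rootsOfUnityDiagonal
      (kron_mem_rootsOfUnityDiagonal hM one_mem_rootsOfUnityDiagonal)) _
  · exact one_mem_rootsOfUnityDiagonal

end Matrix

open Matrix

theorem kron_mul_kron {a b : ℕ} (A C : Matrix (Fin a) (Fin a) ℂ)
    (B D : Matrix (Fin b) (Fin b) ℂ) : kron A B * kron C D = kron (A * C) (B * D) := by
  simp only [kron, reindex_apply, submatrix_mul_equiv, mul_kronecker_mul]

theorem triKron_mul (n i : ℕ) (M N : Matrix (Fin 4) (Fin 4) ℂ) :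
    triKron n i M * triKron n i N = triKron n i (M * N) := by
  unfold triKron
  split
  · simp only [reindex_apply, submatrix_mul_equiv, kron_mul_kron, one_mul]
  · rw [one_mul]

theorem isMonomial_Rmat (α β γ : ℂ) : (Rmat α β γ).IsMonomial := by
  refine ⟨Equiv.swap 1 2, fun i j h => ?_⟩
  fin_cases i <;> fin_cases j <;> simp_all [Rmat] <;> decide

theorem Rmat_mul_self (α β γ : ℂ) :
    Rmat α β γ * Rmat α β γ = diagonal ![1, α * β, α * β, γ * γ] := by
  ext i j
  fin_cases i <;> fin_cases j <;> simp [Rmat, mul_apply, Fin.sum_univ_four, mul_comm]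

variable {α β γ : ℂ} {k : ℕ}

theorem Rmat_mul_self_mem_rootsOfUnityDiagonal [NeZero k] (hαβ : (α * β) ^ k = 1)
    (hγ : γ ^ (2 * k) = 1) :
    Rmat α β γ * Rmat α β γ ∈ rootsOfUnityDiagonal k (Fin 4) ℂ := by
  rw [Rmat_mul_self]
  refine diagonal_mem_rootsOfUnityDiagonal fun i => ?_
  fin_cases i <;> simp [hαβ, ← sq, ← pow_mul, hγ]

theorem Gsub_le_normalizer (n : ℕ) :
    Gsub α β γ n ≤
      Subgroup.normalizer (rootsOfUnityDiagonalSubgroup (Fin (2 ^ n)) ℂ k : Set _) := by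
  rw [Gsub, Subgroup.closure_le]
  rintro b ⟨i, -, -, hb⟩
  exact mem_normalizer_rootsOfUnityDiagonalSubgroup (hb ▸ (isMonomial_Rmat α β γ).triKron)

theorem Hsub_le_rootsOfUnityDiagonalSubgroup [NeZero k] (n : ℕ) (hαβ : (α * β) ^ k = 1)
    (hγ : γ ^ (2 * k) = 1) : Hsub α β γ n ≤ rootsOfUnityDiagonalSubgroup (Fin (2 ^ n)) ℂ k := by
  rw [Hsub, Subgroup.closure_le]
  rintro _ ⟨g, hg, b, ⟨i, -, -, hb⟩, rfl⟩
  have hb2 : b ^ 2 ∈ rootsOfUnityDiagonalSubgroup (Fin (2 ^ n)) ℂ k := by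
    rw [mem_rootsOfUnityDiagonalSubgroup, sq, Units.val_mul, hb, Bmat, triKron_mul]
    exact triKron_mem_rootsOfUnityDiagonal (Rmat_mul_self_mem_rootsOfUnityDiagonal hαβ hγ)
  exact (Subgroup.mem_normalizer_iff.mp (Gsub_le_normalizer n hg) _).mp hb2

theorem stmt_6_general (n : ℕ) (α β γ : ℂ)
    (hroots : ∃ k : ℕ, 1 ≤ k ∧ (α * β) ^ k = 1 ∧ γ ^ (2 * k) = 1) :
    Finite (Hsub α β γ n) ∧
    (∀ x ∈ Hsub α β γ n, ∀ y ∈ Hsub α β γ n, x * y = y * x) := by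
  obtain ⟨k, hk, hαβ, hγ⟩ := hroots
  have : NeZero k := ⟨by omega⟩
  have hH := Hsub_le_rootsOfUnityDiagonalSubgroup n hαβ hγ
  exact ⟨Finite.of_injective _ (Subgroup.inclusion_injective hH),
    fun x hx y hy => rootsOfUnityDiagonalSubgroup_mul_comm (hH hx) (hH hy)⟩

/-- If all eigenvalues of `R` are roots of unity (there is `k ≥ 1` with `(αβ)^k = 1` and
`γ^{2k} = 1`, equivalently `R^{2k} = I`), then `H_n = π_n(P_n)` is a finite abelian group. -/
theorem stmt_6 (n : ℕ) (hn : 2 ≤ n) (α β γ : ℂ) (hα : α ≠ 0) (hβ : β ≠ 0) (hγ : γ ≠ 0)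
    (hroots : ∃ k : ℕ, 1 ≤ k ∧ (α * β) ^ k = 1 ∧ γ ^ (2 * k) = 1) :
    Finite (Hsub α β γ n) ∧
    (∀ x ∈ Hsub α β γ n, ∀ y ∈ Hsub α β γ n, x * y = y * x) :=
  stmt_6_general n α β γ hroots
end
end

section
/- For n ≥ 4, the matrix B_1 B_3 is not a diagonal matrix, and for n = 3, the matrix B_2 B_1 is not a diagonal matrix. (These witness that the classes of the permutations (12)(34) and (123) respectively are nontrivial in G_n / H_n.) -/
open Matrix

noncomputable section

/-! Column `1` of `R` is `β e₂`.  So if `y` has `R`-coordinate `1` for `B_j` and `y'` is `y` with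
that coordinate raised to `2`, then `(B_i B_j) x y = β (B_i) x y'`.  If `y'` has `R`-coordinate `1`
for `B_i` and `x` is `y'` with that coordinate raised to `2`, this is `β² ≠ 0`, so `B_i B_j` is
not diagonal as soon as `x ≠ y`. -/

section TriKron

variable {n i : ℕ} (h : 2 ^ (i - 1) * (4 * 2 ^ (n - i - 1)) = 2 ^ n)

def triKronIndex : Fin (2 ^ (i - 1)) × Fin 4 × Fin (2 ^ (n - i - 1)) ≃ Fin (2 ^ n) :=
  ((Equiv.prodCongr (Equiv.refl _) finProdFinEquiv).trans finProdFinEquiv).trans (finCongr h)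

theorem triKronIndex_val (p : Fin (2 ^ (i - 1)) × Fin 4 × Fin (2 ^ (n - i - 1))) :
    (triKronIndex h p : ℕ) = p.2.2 + 2 ^ (n - i - 1) * p.2.1 + 4 * 2 ^ (n - i - 1) * p.1 := by
  simp [triKronIndex]

theorem triKron_triKronIndex (M : Matrix (Fin 4) (Fin 4) ℂ)
    (p q : Fin (2 ^ (i - 1)) × Fin 4 × Fin (2 ^ (n - i - 1))) :
    triKron n i M (triKronIndex h p) (triKronIndex h q) =
      (1 : Matrix _ _ ℂ) p.1 q.1 * (M p.2.1 q.2.1 * (1 : Matrix _ _ ℂ) p.2.2 q.2.2) := by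
  obtain ⟨a, m, c⟩ := p
  obtain ⟨a', m', c'⟩ := q
  simp [triKron, h, kron, triKronIndex]

theorem mul_triKron_triKronIndex {M : Matrix (Fin 4) (Fin 4) ℂ} {r m : Fin 4}
    (hM : ∀ r' ≠ r, M r' m = 0) (A : Matrix (Fin (2 ^ n)) (Fin (2 ^ n)) ℂ)
    (x : Fin (2 ^ n)) (a : Fin (2 ^ (i - 1))) (c : Fin (2 ^ (n - i - 1))) :
    (A * triKron n i M) x (triKronIndex h (a, m, c)) = A x (triKronIndex h (a, r, c)) * M r m := by
  rw [mul_apply, ← (triKronIndex h).sum_comp, Finset.sum_eq_single (a, r, c)]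
  · simp [triKron_triKronIndex]
  · rintro ⟨a', r', c'⟩ - hne
    by_cases hr : r' = r
    · simp only [triKron_triKronIndex, one_apply]
      grind
    · simp [triKron_triKronIndex, hM r' hr]
  · simp

end TriKron

theorem Rmat_apply_one_of_ne_two (α β γ : ℂ) {r : Fin 4} (hr : r ≠ 2) : Rmat α β γ r 1 = 0 := by
  fin_cases r <;> simp_all [Rmat]

theorem not_isDiag_Bmat_mul_Bmat {n i j : ℕ} (α β γ : ℂ) (hβ : β ≠ 0)
    (hi : 2 ^ (i - 1) * (4 * 2 ^ (n - i - 1)) = 2 ^ n)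
    (hj : 2 ^ (j - 1) * (4 * 2 ^ (n - j - 1)) = 2 ^ n)
    (a : Fin (2 ^ (i - 1))) (c : Fin (2 ^ (n - i - 1)))
    (a' : Fin (2 ^ (j - 1))) (c' : Fin (2 ^ (n - j - 1)))
    (hlink : triKronIndex hj (a', 2, c') = triKronIndex hi (a, 1, c))
    (hne : triKronIndex hi (a, 2, c) ≠ triKronIndex hj (a', 1, c')) :
    ¬ (Bmat α β γ n i * Bmat α β γ n j).IsDiag := by
  intro hdiag
  have hentry := hdiag hne
  rw [Bmat, Bmat, mul_triKron_triKronIndex hj (fun _ => Rmat_apply_one_of_ne_two α β γ), hlink,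
    triKron_triKronIndex] at hentry
  simp [Rmat, hβ] at hentry

theorem stmt_8_general (n : ℕ) (α β γ : ℂ) (hβ : β ≠ 0) :
    (4 ≤ n → ¬ (Bmat α β γ n 1 * Bmat α β γ n 3).IsDiag) ∧
    (n = 3 → ¬ (Bmat α β γ n 2 * Bmat α β γ n 1).IsDiag) := by
  -- In binary: `x = 1010·2^m`, `y' = 0110·2^m`, `y = 0101·2^m` for `n = m + 4`,
  -- and `x = 110`, `y' = 101`, `y = 011` for `n = 3`.
  refine ⟨fun hn => ?_, fun hn => ?_⟩
  · obtain ⟨m, rfl⟩ := Nat.exists_eq_add_of_le' hn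
    have e1 : m + 4 - 1 - 1 = m + 2 := by omega
    have e3 : m + 4 - 3 - 1 = m := by omega
    have h1 : 2 ^ (1 - 1) * (4 * 2 ^ (m + 4 - 1 - 1)) = 2 ^ (m + 4) := by rw [e1]; ring
    have h3 : 2 ^ (3 - 1) * (4 * 2 ^ (m + 4 - 3 - 1)) = 2 ^ (m + 4) := by rw [e3]; ring
    have hpos : 0 < 2 ^ m := by positivity
    have hc : 2 * 2 ^ m < 2 ^ (m + 4 - 1 - 1) := by rw [e1, pow_succ, pow_succ]; omega
    refine not_isDiag_Bmat_mul_Bmat α β γ hβ h1 h3 0 ⟨2 * 2 ^ m, hc⟩ 1 0 ?_ ?_ <;>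
      simp only [Ne, Fin.ext_iff, triKronIndex_val, Fin.val_zero, Fin.val_one, Fin.val_two, e1, e3,
        pow_succ]
    · ring
    · omega
  · subst hn
    refine not_isDiag_Bmat_mul_Bmat α β γ hβ (by norm_num) (by norm_num) 1 0 0 1 ?_ ?_ <;>
      simp only [Ne, Fin.ext_iff, triKronIndex_val] <;> simp

/-- For `n ≥ 4`, `B_1 B_3` is not diagonal, and for `n = 3`, `B_2 B_1` is not diagonal
(witnessing that the classes of `(12)(34)` resp. `(123)` are nontrivial in `G_n / H_n`). -/
theorem stmt_8 (n : ℕ) (hn : 3 ≤ n) (α β γ : ℂ) (hα : α ≠ 0) (hβ : β ≠ 0) (hγ : γ ≠ 0) :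
    (4 ≤ n → ¬ (Bmat α β γ n 1 * Bmat α β γ n 3).IsDiag) ∧
    (n = 3 → ¬ (Bmat α β γ n 2 * Bmat α β γ n 1).IsDiag) :=
  stmt_8_general n α β γ hβ
end
end

section
/- Suppose there exists an integer k ≥ 1 with (αβ)^k = 1 and γ^{2k} = 1 (i.e. all eigenvalues of R are roots of unity). Then for every n ≥ 2 the group G_n, the image of the n-strand braid group under the representation σ_i ↦ B_i, is a finite group. -/
open Matrix

noncomputable section

/-!
Each generator `B_i` is monomial: it sends `e_x` to `r • e_{σ x}`, where `σ` exchanges the bit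
patterns `10` and `01` in two adjacent positions and `r ∈ {1, α, β, γ}`. Rescaling `e_x` by
`β ^ w(x)` with `w(x) = ∑ j * bit_j(x)` turns these factors into `1, αβ, 1, γ`, which are
`2k`-th roots of unity. So every `B_i` maps the finite spanning set of vectors `ζ β ^ w(y) e_y`
(`ζ ^ (2k) = 1`) into itself, and the invertible matrices with this property form a finite group.
-/

namespace Matrix

variable {ι K : Type*} [Fintype ι] [DecidableEq ι] [CommRing K]

def mapsToSubmonoid (X : Set (ι → K)) : Submonoid (Matrix ι ι K) where
  carrier := {M | Set.MapsTo (M *ᵥ ·) X X}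
  one_mem' v hv := by simpa using hv
  mul_mem' {M N} hM hN v hv := by simpa [mulVec_mulVec] using hM (hN hv)

theorem mem_units_mapsToSubmonoid {X : Set (ι → K)} (hX : X.Finite) {g : GL ι K}
    (hg : Set.MapsTo ((g : Matrix ι ι K) *ᵥ ·) X X) : g ∈ (mapsToSubmonoid X).units := by
  have hinj : Set.InjOn ((g : Matrix ι ι K) *ᵥ ·) X := fun v _ w _ h => by
    simpa [mulVec_mulVec] using congrArg (((g⁻¹ : GL ι K) : Matrix ι ι K) *ᵥ ·) h
  refine ⟨hg, fun v hv => ?_⟩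
  obtain ⟨w, hw, rfl⟩ := ((hX.injOn_iff_bijOn_of_mapsTo hg).1 hinj).surjOn hv
  simpa [mulVec_mulVec] using hw

theorem finite_units_mapsToSubmonoid {X : Set (ι → K)} (hX : X.Finite)
    (hspan : Submodule.span K X = ⊤) : Finite (mapsToSubmonoid X).units := by
  have := hX.to_subtype
  refine Finite.of_injective
    (fun g (v : X) => (⟨((g : GL ι K) : Matrix ι ι K) *ᵥ v, g.2.1 v.2⟩ : X))
    fun g h hgh => Subtype.ext <| Units.ext <| toLin'.injective <| LinearMap.ext_on hspan ?_
  intro v hv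
  simpa using congrArg Subtype.val (congrFun hgh ⟨v, hv⟩)

def scaledSingles (m : ℕ) (d : ι → K) : Set (ι → K) :=
  {v | ∃ y, ∃ c : K, c ^ m = 1 ∧ v = Pi.single y (c * d y)}

theorem finite_scaledSingles [IsDomain K] {m : ℕ} (hm : 0 < m) (d : ι → K) :
    (scaledSingles m d).Finite := by
  refine ((Set.finite_univ.prod (Polynomial.nthRootsFinset m (1 : K)).finite_toSet).image
    fun p : ι × K => Pi.single p.1 (p.2 * d p.1)).subset ?_
  rintro _ ⟨y, c, hc, rfl⟩
  exact ⟨(y, c), ⟨trivial, (Polynomial.mem_nthRootsFinset hm 1).2 hc⟩, rfl⟩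

theorem span_scaledSingles (m : ℕ) {d : ι → K} (hd : ∀ y, IsUnit (d y)) :
    Submodule.span K (scaledSingles m d) = ⊤ := by
  refine eq_top_iff.2 <| (Pi.basisFun K ι).span_eq.ge.trans <| Submodule.span_le.2 ?_
  rintro _ ⟨y, rfl⟩
  have hy : Pi.single y (1 * d y) ∈ scaledSingles m d := ⟨y, 1, one_pow m, rfl⟩
  simpa [← Pi.single_smul, (hd y).unit_spec] using
    Submodule.smul_mem _ (hd y).unit⁻¹.val (Submodule.subset_span hy)

theorem mapsTo_scaledSingles {m : ℕ} {d : ι → K} {M : Matrix ι ι K}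
    (hM : ∀ x, ∃ y, ∃ c : K, c ^ m = 1 ∧ M *ᵥ Pi.single x (d x) = Pi.single y (c * d y)) :
    Set.MapsTo (M *ᵥ ·) (scaledSingles m d) (scaledSingles m d) := by
  rintro _ ⟨x, c, hc, rfl⟩
  obtain ⟨y, c', hc', hy⟩ := hM x
  refine ⟨y, c * c', by rw [mul_pow, hc, hc', one_mul], ?_⟩
  change M *ᵥ _ = _
  rw [← smul_eq_mul, Pi.single_smul, mulVec_smul, hy, ← Pi.single_smul, smul_eq_mul, mul_assoc]

end Matrix

def bitWeight (n x : ℕ) : ℕ := ∑ j ∈ Finset.range n, if x.testBit j then j else 0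

theorem bitWeight_swap {n e b : ℕ} (hb : b < 2 ^ e) (he : e + 1 < n) (a : ℕ) :
    bitWeight n (2 ^ e * (4 * a + 2) + b) = bitWeight n (2 ^ e * (4 * a + 1) + b) + 1 := by
  have hbit : ∀ r j, r < 4 → (2 ^ e * (4 * a + r) + b).testBit j =
      if j < e then b.testBit j
      else if j - e < 2 then r.testBit (j - e) else a.testBit (j - e - 2) := by
    intro r j hr
    rw [Nat.testBit_two_pow_mul_add _ hb, show 4 * a + r = 2 ^ 2 * a + r by norm_num,
      Nat.testBit_two_pow_mul_add _ (by omega)]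
  have hsummand : ∀ j,
      ((if (2 ^ e * (4 * a + 2) + b).testBit j then j else 0) + if j = e then e else 0) =
        (if (2 ^ e * (4 * a + 1) + b).testBit j then j else 0) +
          if j = e + 1 then e + 1 else 0 := by
    intro j
    rw [hbit 2 j (by norm_num), hbit 1 j (by norm_num)]
    rcases lt_trichotomy j e with hj | rfl | hj
    · simp [hj, hj.ne, show j ≠ e + 1 by omega]
    · simp
    · rcases eq_or_ne j (e + 1) with rfl | hj'
      · simp +decide
      · simp [hj.not_gt, hj.ne', hj', show ¬ j - e < 2 by omega]
  have := Finset.sum_congr rfl fun j (_ : j ∈ Finset.range n) => hsummand j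
  simp only [Finset.sum_add_distrib, Finset.sum_ite_eq', Finset.mem_range, he,
    show e < n by omega, if_true] at this
  unfold bitWeight
  omega

section TriKron

variable {n i : ℕ}

theorem triKron_size (hi : 1 ≤ i) (hin : i ≤ n - 1) :
    2 ^ (i - 1) * (4 * 2 ^ (n - i - 1)) = 2 ^ n := by
  rw [show (4 : ℕ) = 2 ^ 2 by norm_num, ← pow_add, ← pow_add]
  congr 1
  omega

def triKronEquiv (h : 2 ^ (i - 1) * (4 * 2 ^ (n - i - 1)) = 2 ^ n) :
    Fin (2 ^ (i - 1)) × Fin 4 × Fin (2 ^ (n - i - 1)) ≃ Fin (2 ^ n) :=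
  ((Equiv.refl _).prodCongr finProdFinEquiv).trans (finProdFinEquiv.trans (finCongr h))

variable (h : 2 ^ (i - 1) * (4 * 2 ^ (n - i - 1)) = 2 ^ n)

theorem val_triKronEquiv (a : Fin (2 ^ (i - 1))) (l : Fin 4) (b : Fin (2 ^ (n - i - 1))) :
    (triKronEquiv h (a, l, b) : ℕ) = 2 ^ (n - i - 1) * (4 * a + l) + b := by
  simp [triKronEquiv, finProdFinEquiv]
  ring

theorem triKron_apply_triKronEquiv (M : Matrix (Fin 4) (Fin 4) ℂ) (a a' : Fin (2 ^ (i - 1)))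
    (l l' : Fin 4) (b b' : Fin (2 ^ (n - i - 1))) :
    triKron n i M (triKronEquiv h (a', l', b')) (triKronEquiv h (a, l, b)) =
      if a' = a ∧ b' = b then M l' l else 0 := by
  simp [triKron, dif_pos h, kron, triKronEquiv, one_apply, ← ite_and, and_comm]

theorem col_triKron_triKronEquiv {M : Matrix (Fin 4) (Fin 4) ℂ} {l l' : Fin 4} {c : ℂ}
    (hM : M.col l = Pi.single l' c) (a : Fin (2 ^ (i - 1))) (b : Fin (2 ^ (n - i - 1))) :
    (triKron n i M).col (triKronEquiv h (a, l, b)) =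
      Pi.single (triKronEquiv h (a, l', b)) c := by
  ext x
  obtain ⟨⟨a', l'', b'⟩, rfl⟩ := (triKronEquiv h).surjective x
  have hl := congrFun hM l''
  rw [col_apply] at hl
  rw [col_apply, triKron_apply_triKronEquiv, hl]
  simp only [Pi.single_apply, (triKronEquiv h).injective.eq_iff, Prod.mk.injEq]
  split_ifs <;> simp_all

end TriKron

theorem col_Rmat (α β γ : ℂ) (l : Fin 4) :
    (Rmat α β γ).col l = Pi.single (Equiv.swap 1 2 l) (Rmat α β γ (Equiv.swap 1 2 l) l) := by
  ext l'
  fin_cases l <;> fin_cases l' <;> simp [Rmat, Equiv.swap_apply_def]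

theorem Bmat_mapsTo_scaledSingles {α β γ : ℂ} {n i m : ℕ} (hi : 1 ≤ i) (hin : i ≤ n - 1)
    (hαβ : (α * β) ^ m = 1) (hγ : γ ^ m = 1) :
    Set.MapsTo (Bmat α β γ n i *ᵥ ·)
      (scaledSingles m fun y : Fin (2 ^ n) => β ^ bitWeight n y)
      (scaledSingles m fun y : Fin (2 ^ n) => β ^ bitWeight n y) := by
  have h := triKron_size hi hin
  refine mapsTo_scaledSingles fun x => ?_
  obtain ⟨⟨a, l, b⟩, rfl⟩ := (triKronEquiv h).surjective x
  have hw : bitWeight n (triKronEquiv h (a, 2, b)) =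
      bitWeight n (triKronEquiv h (a, 1, b)) + 1 := by
    simp only [val_triKronEquiv]
    exact bitWeight_swap b.isLt (by omega) a
  refine ⟨triKronEquiv h (a, Equiv.swap 1 2 l, b), ?_⟩
  rw [← mul_one (β ^ _), ← smul_eq_mul, Pi.single_smul, mulVec_smul, mulVec_single_one, Bmat,
    col_triKron_triKronEquiv h (col_Rmat α β γ l), ← Pi.single_smul, smul_eq_mul]
  fin_cases l
  · exact ⟨1, one_pow m, by simp [Rmat, Equiv.swap_apply_def]⟩
  · exact ⟨1, one_pow m, by simp [Rmat, hw, pow_succ]⟩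
  · exact ⟨α * β, hαβ, by simp [Rmat, hw, pow_succ]; ring⟩
  · exact ⟨γ, hγ, by simp [Rmat, Equiv.swap_apply_def]; ring⟩

theorem stmt_9_general (α β γ : ℂ) (hβ : β ≠ 0)
    (hroots : ∃ k : ℕ, 1 ≤ k ∧ (α * β) ^ k = 1 ∧ γ ^ (2 * k) = 1) :
    ∀ n : ℕ, 2 ≤ n → Finite (Gsub α β γ n) := by
  obtain ⟨k, hk, hαβ, hγ⟩ := hroots
  intro n _
  set X := scaledSingles (2 * k) fun y : Fin (2 ^ n) => β ^ bitWeight n y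
  have hX : X.Finite := finite_scaledSingles (by omega) _
  have hG : Gsub α β γ n ≤ (mapsToSubmonoid X).units := by
    refine (Subgroup.closure_le _).2 ?_
    rintro g ⟨i, hi, hin, hg⟩
    refine mem_units_mapsToSubmonoid hX ?_
    rw [hg]
    exact Bmat_mapsTo_scaledSingles hi hin (by rw [pow_mul', hαβ, one_pow]) hγ
  have := finite_units_mapsToSubmonoid hX
    (span_scaledSingles _ fun y => (pow_ne_zero _ hβ).isUnit)
  exact Finite.of_injective _ (Subgroup.inclusion_injective hG)

/-- If all eigenvalues of `R` are roots of unity (there is `k ≥ 1` with `(αβ)^k = 1` and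
`γ^{2k} = 1`), then the image `G_n` of the braid group is a finite group, for every `n ≥ 2`. -/
theorem stmt_9 (α β γ : ℂ) (hα : α ≠ 0) (hβ : β ≠ 0) (hγ : γ ≠ 0)
    (hroots : ∃ k : ℕ, 1 ≤ k ∧ (α * β) ^ k = 1 ∧ γ ^ (2 * k) = 1) :
    ∀ n : ℕ, 2 ≤ n → Finite (Gsub α β γ n) :=
  stmt_9_general α β γ hβ hroots
end
end

section
/- Suppose γ = 1. Then the partial trace of R over the second tensor factor equals the 2 × 2 identity matrix, and likewise for R⁻¹: for both M = R and M = R⁻¹, the 2 × 2 matrix with (i,j) entry Σ_{k=1}^{2} M_{(i,k),(j,k)} is I₂. Consequently, for every 2ⁿ × 2ⁿ complex matrix A, Trace((A ⊗ I₂)·(I₂^{⊗(n−1)} ⊗ R^{±1})) = Trace(A); this is the Markov-stabilization property underlying Turaev's link invariant T_{R,x}(σ) = x^{n−e(σ)}·Trace(π_n(σ)). -/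
open Matrix

noncomputable section

/-- The partial trace over the second tensor factor of a `4 × 4` matrix, whose rows and
columns are indexed by pairs `(i,k) ∈ {1,2}²` lexicographically:
`(ptr M) i j = Σ_k M_{(i,k),(j,k)}`. -/
def ptr (M : Matrix (Fin 4) (Fin 4) ℂ) : Matrix (Fin 2) (Fin 2) ℂ :=
  Matrix.of fun i j => ∑ k : Fin 2, M (finProdFinEquiv (i, k)) (finProdFinEquiv (j, k))

/-- `I₂^{⊗(n−1)} ⊗ M` as a `2ⁿ·2 × 2ⁿ·2` matrix.  The size condition in the `dite` holds
whenever `n ≥ 1`. -/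
def bigTensor (n : ℕ) (M : Matrix (Fin 4) (Fin 4) ℂ) :
    Matrix (Fin (2 ^ n * 2)) (Fin (2 ^ n * 2)) ℂ :=
  if h : 2 ^ (n - 1) * 4 = 2 ^ n * 2 then
    Matrix.reindex (finCongr h) (finCongr h)
      (kron (1 : Matrix (Fin (2 ^ (n - 1))) (Fin (2 ^ (n - 1))) ℂ) M)
  else 1

/-!
In `trace ((A ⊗ I₂) (I ⊗ M))` the last tensor index is only touched by `M` and by the
identity factor, so summing over it contracts `M` to its partial trace: the trace equals
`trace (A (I ⊗ ptr M))`, which is `trace A` as soon as `ptr M = I₂`. For `R = Rmat α β γ` the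
partial trace is `diag(1, γ)`, and `R⁻¹ = Rmat β⁻¹ α⁻¹ γ⁻¹` has the same shape, so `γ = 1`
gives `ptr R = ptr R⁻¹ = I₂`.
-/

open scoped Kronecker

namespace Matrix

variable {R m n p : Type*}

def partialTraceRight [AddCommMonoid R] [Fintype p] (M : Matrix (n × p) (n × p) R) :
    Matrix n n R :=
  of fun i j => ∑ k, M (i, k) (j, k)

theorem trace_submatrix_equiv [AddCommMonoid R] [Fintype m] [Fintype n] (A : Matrix n n R)
    (e : m ≃ n) : trace (A.submatrix e e) = trace A :=
  e.sum_comp A.diag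

variable [Semiring R] [Fintype m] [Fintype n] [Fintype p]

theorem trace_kronecker_one_mul_one_kronecker [DecidableEq m] [DecidableEq p]
    (A : Matrix (m × n) (m × n) R) (M : Matrix (n × p) (n × p) R) :
    trace (A ⊗ₖ (1 : Matrix p p R) *
        ((1 : Matrix m m R) ⊗ₖ M).submatrix (Equiv.prodAssoc m n p) (Equiv.prodAssoc m n p)) =
      trace (A * (1 : Matrix m m R) ⊗ₖ partialTraceRight M) := by
  simp only [trace, diag, mul_apply, submatrix_apply, kroneckerMap_apply, partialTraceRight,
    of_apply, Fintype.sum_prod_type, Equiv.prodAssoc_apply, one_apply]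
  simp [Finset.mul_sum, Finset.sum_comm (γ := p)]

theorem trace_kronecker_one_mul_one_kronecker_of_partialTraceRight_eq_one
    [DecidableEq m] [DecidableEq n] [DecidableEq p]
    (A : Matrix (m × n) (m × n) R) {M : Matrix (n × p) (n × p) R}
    (hM : partialTraceRight M = 1) :
    trace (A ⊗ₖ (1 : Matrix p p R) *
        ((1 : Matrix m m R) ⊗ₖ M).submatrix (Equiv.prodAssoc m n p) (Equiv.prodAssoc m n p)) =
      trace A := by
  rw [trace_kronecker_one_mul_one_kronecker, hM, one_kronecker_one, mul_one]

end Matrix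

theorem kron_submatrix_prodCongr {a b : ℕ} {ι κ : Type*} (A : Matrix (Fin a) (Fin a) ℂ)
    (B : Matrix (Fin b) (Fin b) ℂ) (f : ι ≃ Fin a) (g : κ ≃ Fin b) :
    (kron A B).submatrix ((f.prodCongr g).trans finProdFinEquiv)
        ((f.prodCongr g).trans finProdFinEquiv) =
      A.submatrix f f ⊗ₖ B.submatrix g g := by
  ext ⟨i, k⟩ ⟨j, l⟩
  simp [kron]

theorem ptr_eq_partialTraceRight (M : Matrix (Fin 4) (Fin 4) ℂ) :
    ptr M = partialTraceRight (M.submatrix (finProdFinEquiv (m := 2) (n := 2)) finProdFinEquiv) :=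
  rfl

def finTwoPowSplit {n : ℕ} (hn : 1 ≤ n) : Fin (2 ^ (n - 1)) × Fin 2 ≃ Fin (2 ^ n) :=
  finProdFinEquiv.trans (finCongr (by rw [← pow_succ, Nat.sub_add_cancel hn]))

theorem bigTensor_submatrix {n : ℕ} (hn : 1 ≤ n) (M : Matrix (Fin 4) (Fin 4) ℂ) :
    (bigTensor n M).submatrix (((finTwoPowSplit hn).prodCongr (Equiv.refl _)).trans finProdFinEquiv)
        (((finTwoPowSplit hn).prodCongr (Equiv.refl _)).trans finProdFinEquiv) =
      ((1 : Matrix (Fin (2 ^ (n - 1))) (Fin (2 ^ (n - 1))) ℂ) ⊗ₖ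
        M.submatrix finProdFinEquiv finProdFinEquiv).submatrix
          (Equiv.prodAssoc _ _ _) (Equiv.prodAssoc _ _ _) := by
  have h : 2 ^ (n - 1) * 4 = 2 ^ n * 2 := by
    rw [show 4 = 2 * 2 from rfl, ← mul_assoc, ← pow_succ, Nat.sub_add_cancel hn]
  have he : ∀ (p : Fin (2 ^ (n - 1))) (i k : Fin 2),
      finProdFinEquiv (finTwoPowSplit hn (p, i), k) =
        finCongr h (finProdFinEquiv (p, finProdFinEquiv (i, k))) := by
    intro p i k
    ext
    simp only [finTwoPowSplit, Equiv.trans_apply, finCongr_apply, Fin.val_cast,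
      finProdFinEquiv_apply_val]
    ring
  ext ⟨⟨p, i⟩, k⟩ ⟨⟨q, j⟩, l⟩
  simp [bigTensor, dif_pos h, he, kron]

theorem trace_kron_one_mul_bigTensor {n : ℕ} (hn : 1 ≤ n) {M : Matrix (Fin 4) (Fin 4) ℂ}
    (hM : ptr M = 1) (A : Matrix (Fin (2 ^ n)) (Fin (2 ^ n)) ℂ) :
    trace (kron A 1 * bigTensor n M) = trace A := by
  rw [ptr_eq_partialTraceRight] at hM
  set e := ((finTwoPowSplit hn).prodCongr (Equiv.refl (Fin 2))).trans finProdFinEquiv with he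
  rw [← trace_submatrix_equiv _ e, ← submatrix_mul_equiv _ _ e e e, he, kron_submatrix_prodCongr,
    bigTensor_submatrix, Equiv.coe_refl, submatrix_id_id,
    trace_kronecker_one_mul_one_kronecker_of_partialTraceRight_eq_one _ hM, trace_submatrix_equiv]

theorem ptr_Rmat (α β γ : ℂ) : ptr (Rmat α β γ) = diagonal ![1, γ] := by
  ext i j
  fin_cases i <;> fin_cases j <;> simp [ptr, Rmat, Fin.sum_univ_two, finProdFinEquiv]

theorem Rmat_inv {α β γ : ℂ} (hα : α ≠ 0) (hβ : β ≠ 0) (hγ : γ ≠ 0) :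
    (Rmat α β γ)⁻¹ = Rmat β⁻¹ α⁻¹ γ⁻¹ := by
  refine inv_eq_right_inv ?_
  ext i j
  fin_cases i <;> fin_cases j <;> simp [Rmat, mul_apply, Fin.sum_univ_four, hα, hβ, hγ]

theorem ptr_Rmat_one (α β : ℂ) : ptr (Rmat α β 1) = 1 := by
  rw [ptr_Rmat, ← diagonal_one]
  congr 1
  ext i
  fin_cases i <;> rfl

/-- For `γ = 1`: the partial trace of `R` (and of `R⁻¹`) over the second tensor factor is
`I₂`, and consequently `Trace((A ⊗ I₂)·(I₂^{⊗(n−1)} ⊗ R^{±1})) = Trace(A)` for every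
`2ⁿ × 2ⁿ` matrix `A` — the Markov-stabilization property underlying Turaev's link
invariant `T_{R,x}(σ) = x^{n−e(σ)}·Trace(π_n(σ))`. -/
theorem stmt_12 (n : ℕ) (hn : 2 ≤ n) (α β : ℂ) (hα : α ≠ 0) (hβ : β ≠ 0) :
    ptr (Rmat α β 1) = 1 ∧ ptr ((Rmat α β 1)⁻¹) = 1 ∧
    ∀ A : Matrix (Fin (2 ^ n)) (Fin (2 ^ n)) ℂ,
      Matrix.trace (kron A (1 : Matrix (Fin 2) (Fin 2) ℂ) * bigTensor n (Rmat α β 1)) =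
        Matrix.trace A ∧
      Matrix.trace (kron A (1 : Matrix (Fin 2) (Fin 2) ℂ) * bigTensor n ((Rmat α β 1)⁻¹)) =
        Matrix.trace A := by
  have hR : ptr (Rmat α β 1) = 1 := ptr_Rmat_one α β
  have hRinv : ptr (Rmat α β 1)⁻¹ = 1 := by
    rw [Rmat_inv hα hβ one_ne_zero, inv_one]
    exact ptr_Rmat_one _ _
  have hn' : 1 ≤ n := by omega
  exact ⟨hR, hRinv, fun A =>
    ⟨trace_kron_one_mul_bigTensor hn' hR A, trace_kron_one_mul_bigTensor hn' hRinv A⟩⟩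
end
end
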